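/- Let γ > 0, ρ > 0, μ > 0, and let C₀, C_{γ,0}, C_{μ,0} > 0 and 0 < T_f < ∞ be given. Then there exists a constant C = C(γ, ρ, μ, C₀, C_{γ,0}, C_{μ,0}, T_f) > 0 with the following property: for every 0 < ε < 1, if φ : [0, T_f] → ℓ² is a solution of the saturable DNLS equation and ψ : [0, T_f] → ℓ² is a solution of the AL lattice whose initial data satisfy ‖φ(0) − ψ(0)‖_{ℓ²} ≤ C₀ ε³, ‖φ(0)‖_{ℓ²} ≤ C_{γ,0} ε, and P_μ(ψ(0)) ≤ C_{μ,0} ε², then ‖φ(t) − ψ(t)‖_{ℓ²} ≤ C ε³ for every t ∈ [0, T_f]. -/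

import Mathlib

open Set

noncomputable section

/-- The Hilbert space ℓ² of square-summable sequences of complex numbers indexed by ℤ. -/
abbrev l2 : Type := lp (fun _ : ℤ => ℂ) 2

/-- `φ : I → ℓ²` is a solution of the saturable DNLS equation
`i φ̇ₙ + (φₙ₊₁ + φₙ₋₁) + γ|φₙ|²φₙ/(1 + ρ|φₙ|²) = 0` on the set `s`, with derivative curve
`φ'`: it is continuously differentiable and satisfies the equation componentwise. -/
def IsSatDNLSSol (γ ρ : ℝ) (s : Set ℝ) (φ φ' : ℝ → l2) : Prop :=
  (∀ t ∈ s, HasDerivWithinAt φ (φ' t) s t) ∧ ContinuousOn φ' s ∧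
    ∀ t ∈ s, ∀ n : ℤ,
      Complex.I * (φ' t) n + ((φ t) (n + 1) + (φ t) (n - 1))
        + (γ * ‖(φ t) n‖ ^ 2 : ℝ) * (φ t) n / (1 + ρ * ‖(φ t) n‖ ^ 2 : ℝ) = 0

/-- `ψ : I → ℓ²` is a solution of the Ablowitz–Ladik lattice
`i ψ̇ₙ + (ψₙ₊₁ + ψₙ₋₁) + μ|ψₙ|²(ψₙ₊₁ + ψₙ₋₁) = 0` on the set `s`, with derivative curve `ψ'`:
it is continuously differentiable and satisfies the equation componentwise. -/
def IsALSol (μ : ℝ) (s : Set ℝ) (ψ ψ' : ℝ → l2) : Prop :=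
  (∀ t ∈ s, HasDerivWithinAt ψ (ψ' t) s t) ∧ ContinuousOn ψ' s ∧
    ∀ t ∈ s, ∀ n : ℤ,
      Complex.I * (ψ' t) n + ((ψ t) (n + 1) + (ψ t) (n - 1))
        + (μ * ‖(ψ t) n‖ ^ 2 : ℝ) * ((ψ t) (n + 1) + (ψ t) (n - 1)) = 0

/-- The deformed power `P_μ(ψ) = Σₙ ln(1 + μ|ψₙ|²)`. -/
def Pdef (μ : ℝ) (ψ : l2) : ℝ := ∑' n : ℤ, Real.log (1 + μ * ‖ψ n‖ ^ 2)

open Complex Filter Topology ComplexConjugate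

/-!
Both lattices perturb the linear lattice `i u̇ + (uₙ₊₁ + uₙ₋₁) = 0`, whose generator
`i (S + S⁻¹)` (`S` the shift) is skew-adjoint on `ℓ²`. Hence for `Δ = φ - ψ` the growth rate
`Re ⟪Δ, Δ̇⟫` only sees the nonlinear terms, whose `ℓ²` norms are at most `γ ‖φ‖³` and
`2 μ ‖ψ‖³`, and `‖Δ(t)‖ ≤ ‖Δ(0)‖ + t · sup (γ ‖φ‖³ + 2 μ ‖ψ‖³)`.
Both nonlinear terms are `O(ε³)` thanks to a conservation law. The saturable nonlinearity is a
real multiple of `φₙ`, so `‖φ‖` is conserved. For the AL lattice,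
`log (1 + μ |ψₙ|²)` satisfies a discrete continuity equation with current
`2 μ Im (ψₙ ψ̄ₙ₊₁)`; the currents decay uniformly in `n` along the compact orbit `ψ([0, T_f])`,
so the telescoping sum `P_μ(ψ)` is constant, and `μ ‖ψ‖² ≤ exp P_μ(ψ) · P_μ(ψ)` gives
`‖ψ‖ = O(ε)`.
-/

section Calculus

variable {𝕜 E : Type*} [RCLike 𝕜] [NormedAddCommGroup E] [InnerProductSpace 𝕜 E]
  [NormedSpace ℝ E]

theorem hasDerivWithinAt_norm_sq {f : ℝ → E} {f' : E} {s : Set ℝ} {t : ℝ}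
    (hf : HasDerivWithinAt f f' s t) :
    HasDerivWithinAt (fun τ => ‖f τ‖ ^ 2) (2 * RCLike.re (inner 𝕜 (f t) f')) s t := by
  have h := (RCLike.reCLM (K := 𝕜)).hasFDerivAt.comp_hasDerivWithinAt t (hf.inner 𝕜 hf)
  have hsq : (RCLike.reCLM ∘ fun τ => inner 𝕜 (f τ) (f τ)) = fun τ => ‖f τ‖ ^ 2 := by
    funext τ; simp only [Function.comp_apply, RCLike.reCLM_apply, inner_self_eq_norm_sq]
  rw [hsq] at h
  refine h.congr_deriv ?_
  rw [RCLike.reCLM_apply, map_add, ← inner_conj_symm (f t) f', RCLike.conj_re]; ring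

theorem norm_le_add_mul_of_re_inner_le {f f' : ℝ → E} {a b B : ℝ} (hB : 0 ≤ B)
    (hf : ∀ t ∈ Icc a b, HasDerivWithinAt f (f' t) (Icc a b) t)
    (hre : ∀ t ∈ Icc a b, RCLike.re (inner 𝕜 (f t) (f' t)) ≤ B * ‖f t‖) :
    ∀ t ∈ Icc a b, ‖f t‖ ≤ ‖f a‖ + B * (t - a) := by
  intro t ht
  refine le_of_forall_pos_le_add fun δ hδ => ?_
  -- `√(‖f‖² + δ²)` is a differentiable stand-in for `‖f‖`
  set g : ℝ → ℝ := fun τ => √(‖f τ‖ ^ 2 + δ ^ 2)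
  have hg_pos : ∀ τ, 0 < g τ := fun τ => Real.sqrt_pos.2 (by positivity)
  have hg : ∀ τ ∈ Icc a b, HasDerivWithinAt g
      (2 * RCLike.re (inner 𝕜 (f τ) (f' τ)) / (2 * g τ)) (Icc a b) τ := fun τ hτ =>
    ((hasDerivWithinAt_norm_sq (hf τ hτ)).add_const _).sqrt (by positivity)
  have hle : ∀ τ, ‖f τ‖ ≤ g τ := fun τ => Real.le_sqrt_of_sq_le (by nlinarith)
  have hga : g a ≤ ‖f a‖ + δ :=
    Real.sqrt_le_iff.2 ⟨by positivity, by nlinarith [norm_nonneg (f a)]⟩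
  have hgt := image_le_of_deriv_right_le_deriv_boundary (f := g)
    (B := fun τ => g a + B * (τ - a))
    (fun τ hτ => (hg τ hτ).continuousWithinAt)
    (fun τ hτ => (hg τ (Ico_subset_Icc_self hτ)).mono_of_mem_nhdsWithin
      (Icc_mem_nhdsGE_of_mem hτ))
    (by simp) (by fun_prop)
    (fun τ _ => (((hasDerivWithinAt_id _ _).sub_const a).const_mul B).const_add _)
    (fun τ hτ => by
      rw [mul_div_mul_left _ _ two_ne_zero, div_le_iff₀ (hg_pos τ), mul_one]
      exact (hre τ (Ico_subset_Icc_self hτ)).trans (mul_le_mul_of_nonneg_left (hle τ) hB))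
    ht
  linarith [hle t]

end Calculus

theorem TendstoUniformlyOn.of_abs_le_mul {ι α : Type*} {F G : ι → α → ℝ} {l : Filter ι}
    {s : Set α} (hF : TendstoUniformlyOn F 0 l s) (C : ℝ)
    (hG : ∀ i, ∀ x ∈ s, |G i x| ≤ C * F i x) : TendstoUniformlyOn G 0 l s := by
  rw [Metric.tendstoUniformlyOn_iff] at hF ⊢
  intro ε hε
  filter_upwards [hF (ε / (|C| + 1)) (by positivity)] with i hi x hx
  have hFx := hi x hx
  simp only [Pi.zero_apply, dist_zero_left, Real.norm_eq_abs] at hFx ⊢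
  calc |G i x| ≤ C * F i x := hG i x hx
    _ ≤ |C| * |F i x| := (le_abs_self _).trans (abs_mul C _).le
    _ ≤ |C| * (ε / (|C| + 1)) := by gcongr
    _ < ε := by
      rw [mul_div_assoc', div_lt_iff₀ (by positivity)]
      nlinarith [abs_nonneg C]

theorem Finset.sum_Ioc_sub_int {M : Type*} [AddCommGroup M] (f : ℤ → M) {a b : ℤ} (hab : a ≤ b) :
    ∑ n ∈ Finset.Ioc a b, (f n - f (n - 1)) = f b - f a := by
  induction b, hab using Int.leInduction with
  | base => simp
  | succ b hab ih =>
    have hins : Finset.Ioc a (b + 1) = insert (b + 1) (Finset.Ioc a b) := by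
      ext m; simp only [Finset.mem_Ioc, Finset.mem_insert]; omega
    rw [hins, Finset.sum_insert (by simp), ih, add_sub_cancel_right]
    abel

theorem tsum_eq_of_hasDerivWithinAt_sub {g h : ℤ → ℝ → ℝ} {a b : ℝ}
    (hg : ∀ n, ∀ t ∈ Icc a b, HasDerivWithinAt (g n) (h n t - h (n - 1) t) (Icc a b) t)
    (hh : TendstoUniformlyOn h 0 cofinite (Icc a b))
    (hs : ∀ t ∈ Icc a b, Summable fun n => g n t) :
    ∀ t ∈ Icc a b, ∑' n, g n t = ∑' n, g n a := by
  intro t ht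
  have ha : a ∈ Icc a b := ⟨le_rfl, ht.1.trans ht.2⟩
  set S : ℕ → ℝ → ℝ := fun N τ => ∑ n ∈ Finset.Ioc (-(N : ℤ)) N, g n τ
  have hS : ∀ τ ∈ Icc a b, Tendsto (fun N => S N τ) atTop (𝓝 (∑' n, g n τ)) := fun τ hτ =>
    SummationFilter.hasSum_symmetricIoc_int_iff.1
      ((hs τ hτ).hasSum.mono_left (SummationFilter.symmetricIoc ℤ).le_atTop)
  have hS' : ∀ N : ℕ, ∀ τ ∈ Icc a b,
      HasDerivWithinAt (S N) (h N τ - h (-(N : ℤ)) τ) (Icc a b) τ := fun N τ hτ => by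
    rw [← Finset.sum_Ioc_sub_int (h · τ) (by omega)]
    exact HasDerivWithinAt.fun_sum fun n _ => hg n τ hτ
  have hbdry : ∀ δ > 0, ∀ᶠ N : ℕ in atTop, ∀ τ ∈ Icc a b, |h N τ - h (-(N : ℤ)) τ| ≤ 2 * δ := by
    intro δ hδ
    have hev := Metric.tendstoUniformlyOn_iff.1 hh δ hδ
    rw [← Nat.cofinite_eq_atTop]
    filter_upwards [Nat.cast_injective.tendsto_cofinite.eventually hev,
      (neg_injective.comp Nat.cast_injective).tendsto_cofinite.eventually hev] with N h₁ h₂ τ hτ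
    have h₁ := h₁ τ hτ
    have h₂ := h₂ τ hτ
    simp only [Pi.zero_apply, Real.dist_eq, zero_sub, abs_neg, Function.comp_apply] at h₁ h₂
    linarith [abs_sub (h N τ) (h (-(N : ℤ)) τ)]
  have hdiff : ∀ δ > 0, |∑' n, g n t - ∑' n, g n a| ≤ 2 * δ * (b - a) := by
    intro δ hδ
    refine le_of_tendsto ((hS t ht).sub (hS a ha)).abs ?_
    filter_upwards [hbdry δ hδ] with N hN
    calc |S N t - S N a| ≤ 2 * δ * ‖t - a‖ :=
          Convex.norm_image_sub_le_of_norm_hasDerivWithin_le (hS' N) hN (convex_Icc a b) ha ht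
      _ ≤ 2 * δ * (b - a) := by
          rw [Real.norm_of_nonneg (sub_nonneg.2 ht.1)]; gcongr; exact ht.2
  have hlim : Tendsto (fun δ : ℝ => 2 * δ * (b - a)) (𝓝[>] 0) (𝓝 0) := by
    simpa using (((tendsto_id (x := 𝓝 (0 : ℝ))).const_mul 2).mul_const (b - a)).mono_left
      nhdsWithin_le_nhds
  exact sub_eq_zero.1 (abs_nonpos_iff.1
    (ge_of_tendsto hlim (eventually_nhdsWithin_of_forall hdiff)))

namespace lp

variable {α : Type*} {E : α → Type*} [∀ i, NormedAddCommGroup (E i)] {p : ENNReal}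

theorem tendsto_norm_apply_cofinite_zero (hp : 0 < p.toReal) (x : lp E p) :
    Tendsto (fun i => ‖x i‖) cofinite (𝓝 0) := by
  have h := ((lp.memℓp x).summable hp).tendsto_cofinite_zero
  have hc : Tendsto (fun y : ℝ => y ^ p.toReal⁻¹) (𝓝 0) (𝓝 0) := by
    simpa [Real.zero_rpow (inv_pos.2 hp).ne'] using
      (Real.continuousAt_rpow_const 0 p.toReal⁻¹ (Or.inr (inv_pos.2 hp).le)).tendsto
  refine (hc.comp h).congr fun i => ?_
  simp [← Real.rpow_mul (norm_nonneg _), mul_inv_cancel₀ hp.ne']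

theorem tendstoUniformlyOn_norm_apply_zero [Fact (1 ≤ p)] (hp : p ≠ ⊤) {K : Set (lp E p)}
    (hK : IsCompact K) : TendstoUniformlyOn (fun i (x : lp E p) => ‖x i‖) 0 cofinite K := by
  have hp₀ : p ≠ 0 := (zero_lt_one.trans_le Fact.out).ne'
  have hlip : ∀ i, LipschitzWith 1 fun x : lp E p => ‖x i‖ := fun i =>
    LipschitzWith.of_dist_le_mul fun x y => by
      simpa [dist_eq_norm, ← lp.coeFn_sub, Pi.sub_apply] using
        (abs_norm_sub_norm_le (x i) (y i)).trans (lp.norm_apply_le_norm hp₀ (x - y) i)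
  have heq : EquicontinuousOn (fun i (x : lp E p) => ‖x i‖) K :=
    (LipschitzWith.uniformEquicontinuous _ 1 hlip).equicontinuous.equicontinuousOn K
  -- equicontinuity upgrades pointwise convergence to uniform convergence on the compact `K`
  have h := (EquicontinuousOn.tendsto_uniformOnFun_iff_pi' (𝔖 := {K}) (by simpa using hK)
    (by simpa using heq) cofinite 0).2 <| tendsto_pi_nhds.2 fun x =>
      by simpa using tendsto_norm_apply_cofinite_zero (ENNReal.toReal_pos hp₀ hp) (x : lp E p)
  simpa [UniformOnFun.tendsto_iff_tendstoUniformlyOn, Function.comp_def] using h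

end lp

namespace l2

theorem hasSum_norm_sq (x : l2) : HasSum (fun n => ‖x n‖ ^ 2) (‖x‖ ^ 2) := by
  have h := lp.hasSum_norm (p := 2) (by norm_num) x
  simp only [ENNReal.toReal_ofNat, Real.rpow_two] at h
  exact h

theorem hasDerivWithinAt_apply {u : ℝ → l2} {u' : l2} {s : Set ℝ} {t : ℝ}
    (hu : HasDerivWithinAt u u' s t) (n : ℤ) : HasDerivWithinAt (fun τ => u τ n) (u' n) s t :=
  (lp.evalCLM ℝ (fun _ : ℤ => ℂ) 2 n).hasFDerivAt.comp_hasDerivWithinAt t hu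

theorem norm_le_mul_of_norm_apply_le {u v : l2} {C : ℝ} (hC : 0 ≤ C)
    (h : ∀ n, ‖u n‖ ≤ C * ‖v n‖) : ‖u‖ ≤ C * ‖v‖ := by
  have := lp.norm_mono (x := u) (y := (C : ℂ) • v) two_ne_zero fun n => by
    rw [lp.coeFn_smul, Pi.smul_apply, norm_smul, Complex.norm_real, Real.norm_of_nonneg hC]
    exact h n
  rwa [norm_smul, Complex.norm_real, Real.norm_of_nonneg hC] at this

theorem im_inner_eq_zero_of_apply_eq_ofReal_mul {u w : l2} (c : ℤ → ℝ)
    (h : ∀ n, w n = c n * u n) : (inner ℂ u w).im = 0 := by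
  have hterm : ∀ n, inner ℂ (u n) (w n) = ((c n * ‖u n‖ ^ 2 : ℝ) : ℂ) := fun n => by
    rw [h n, RCLike.inner_apply]; push_cast; rw [← Complex.mul_conj']; ring
  rw [lp.inner_eq_tsum, tsum_congr hterm, ← Complex.ofReal_tsum, Complex.ofReal_im]

def shift (k : ℤ) : l2 →ₗᵢ[ℂ] l2 where
  toFun u := ⟨fun n => u (n + k), memℓp_gen <|
    (Equiv.addRight k).summable_iff.2 ((lp.memℓp u).summable (by norm_num))⟩
  map_add' _ _ := rfl
  map_smul' _ _ := rfl
  norm_map' u := by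
    rw [lp.norm_eq_tsum_rpow (by norm_num), lp.norm_eq_tsum_rpow (by norm_num)]
    exact congrArg (· ^ _) ((Equiv.addRight k).tsum_eq fun n => ‖u n‖ ^ (2 : ENNReal).toReal)

@[simp]
theorem shift_apply (k : ℤ) (u : l2) (n : ℤ) : shift k u n = u (n + k) := rfl

theorem inner_shift_right (k : ℤ) (u v : l2) :
    inner ℂ u (shift k v) = inner ℂ (shift (-k) u) v := by
  rw [lp.inner_eq_tsum, lp.inner_eq_tsum,
    ← (Equiv.addRight k).tsum_eq fun n => inner ℂ (shift (-k) u n) (v n)]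
  simp

def neighborSum : l2 →ₗ[ℂ] l2 := (shift 1).toLinearMap + (shift (-1)).toLinearMap

@[simp]
theorem neighborSum_apply (u : l2) (n : ℤ) : neighborSum u n = u (n + 1) + u (n - 1) := by
  simp [neighborSum, sub_eq_add_neg]

theorem norm_neighborSum_le (u : l2) : ‖neighborSum u‖ ≤ 2 * ‖u‖ := by
  calc ‖neighborSum u‖ ≤ ‖shift 1 u‖ + ‖shift (-1) u‖ := norm_add_le _ _
    _ = 2 * ‖u‖ := by simp; ring

theorem im_inner_neighborSum_self (u : l2) : (inner ℂ u (neighborSum u)).im = 0 := by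
  have h : inner ℂ u (shift (-1) u) = conj (inner ℂ u (shift 1 u)) := by
    rw [inner_shift_right, neg_neg, inner_conj_symm]
  rw [neighborSum, LinearMap.add_apply, LinearIsometry.coe_toLinearMap,
    LinearIsometry.coe_toLinearMap, inner_add_right, h, add_im, conj_im, add_neg_cancel]

theorem re_inner_eq_im_inner_add_neighborSum (u U : l2) :
    (inner ℂ u U).re = (inner ℂ u (I • U + neighborSum u)).im := by
  simp [im_inner_neighborSum_self]

theorem abs_re_inner_sub_le (x y X Y : l2) :
    |(inner ℂ (x - y) (X - Y)).re|
      ≤ ‖x - y‖ * (‖I • X + neighborSum x‖ + ‖I • Y + neighborSum y‖) := by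
  have hsplit : I • (X - Y) + neighborSum (x - y)
      = (I • X + neighborSum x) - (I • Y + neighborSum y) := by
    rw [map_sub, smul_sub]; abel
  rw [re_inner_eq_im_inner_add_neighborSum, hsplit]
  calc _ ≤ ‖inner ℂ (x - y) ((I • X + neighborSum x) - (I • Y + neighborSum y))‖ :=
        Complex.abs_im_le_norm _
    _ ≤ ‖x - y‖ * ‖(I • X + neighborSum x) - (I • Y + neighborSum y)‖ := norm_inner_le_norm _ _
    _ ≤ _ := by gcongr; exact norm_sub_le _ _

end l2

def bondCurrent (u : ℤ → ℂ) (n : ℤ) : ℝ := (u n * conj (u (n + 1))).im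

theorem re_conj_mul_I_mul_add_eq_bondCurrent_sub (u : ℤ → ℂ) (n : ℤ) :
    (conj (u n) * (I * (u (n + 1) + u (n - 1)))).re = bondCurrent u n - bondCurrent u (n - 1) := by
  simp only [bondCurrent, sub_add_cancel, mul_re, mul_im, add_re, add_im, conj_re, conj_im,
    I_re, I_im]
  ring

theorem abs_bondCurrent_le (u : ℤ → ℂ) (n : ℤ) : |bondCurrent u n| ≤ ‖u n‖ * ‖u (n + 1)‖ := by
  simpa [bondCurrent] using abs_im_le_norm (u n * conj (u (n + 1)))

theorem l2.tendstoUniformlyOn_const_mul_bondCurrent (c : ℝ) {s : Set ℝ} (hs : IsCompact s)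
    {u : ℝ → l2} (hu : ContinuousOn u s) :
    TendstoUniformlyOn (fun n t => c * bondCurrent (u t) n) 0 cofinite s := by
  obtain ⟨M, hM⟩ := hs.exists_bound_of_continuousOn hu
  have hdecay : TendstoUniformlyOn (fun n t => ‖u t n‖) 0 cofinite s :=
    ((lp.tendstoUniformlyOn_norm_apply_zero ENNReal.ofNat_ne_top
      (hs.image_of_continuousOn hu)).comp u).mono (subset_preimage_image u s)
  refine hdecay.of_abs_le_mul (|c| * M) fun n t ht => ?_
  calc |c * bondCurrent (u t) n| = |c| * |bondCurrent (u t) n| := abs_mul _ _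
    _ ≤ |c| * (‖u t n‖ * M) := by
        gcongr
        exact (abs_bondCurrent_le _ n).trans (by
          gcongr; exact (lp.norm_apply_le_norm two_ne_zero _ _).trans (hM t ht))
    _ = |c| * M * ‖u t n‖ := by ring

theorem summable_log_one_add_mul_norm_sq {μ : ℝ} (hμ : 0 ≤ μ) (x : l2) :
    Summable fun n => Real.log (1 + μ * ‖x n‖ ^ 2) :=
  ((l2.hasSum_norm_sq x).summable.mul_left μ).of_nonneg_of_le
    (fun n => Real.log_nonneg (by nlinarith [sq_nonneg ‖x n‖]))
    (fun n => (Real.log_le_sub_one_of_pos (by positivity)).trans_eq (by ring))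

theorem mul_norm_sq_le_exp_mul_of_Pdef_le {μ P : ℝ} (hμ : 0 ≤ μ) {x : l2} (hP : Pdef μ x ≤ P) :
    μ * ‖x‖ ^ 2 ≤ Real.exp P * P := by
  have hlog := summable_log_one_add_mul_norm_sq hμ x
  have hnn : ∀ n, 0 ≤ Real.log (1 + μ * ‖x n‖ ^ 2) := fun n =>
    Real.log_nonneg (by nlinarith [sq_nonneg ‖x n‖])
  -- termwise `u ≤ (1 + u) log (1 + u)` with `u = μ |xₙ|²`, and `1 + u ≤ exp P`
  have hterm : ∀ n, μ * ‖x n‖ ^ 2 ≤ Real.exp P * Real.log (1 + μ * ‖x n‖ ^ 2) := by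
    intro n
    have hpos : 0 < 1 + μ * ‖x n‖ ^ 2 := by positivity
    have hexp : 1 + μ * ‖x n‖ ^ 2 ≤ Real.exp P := by
      rw [← Real.exp_log hpos]
      exact Real.exp_le_exp.2 ((hlog.le_tsum n fun m _ => hnn m).trans hP)
    calc μ * ‖x n‖ ^ 2 = (1 + μ * ‖x n‖ ^ 2) * (1 - (1 + μ * ‖x n‖ ^ 2)⁻¹) := by
          field_simp; ring
      _ ≤ (1 + μ * ‖x n‖ ^ 2) * Real.log (1 + μ * ‖x n‖ ^ 2) :=
          mul_le_mul_of_nonneg_left (Real.one_sub_inv_le_log_of_pos hpos) hpos.le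
      _ ≤ Real.exp P * Real.log (1 + μ * ‖x n‖ ^ 2) :=
          mul_le_mul_of_nonneg_right hexp (hnn n)
  calc μ * ‖x‖ ^ 2 = ∑' n, μ * ‖x n‖ ^ 2 := ((l2.hasSum_norm_sq x).mul_left μ).tsum_eq.symm
    _ ≤ ∑' n, Real.exp P * Real.log (1 + μ * ‖x n‖ ^ 2) :=
        ((l2.hasSum_norm_sq x).summable.mul_left μ).tsum_le_tsum hterm (hlog.mul_left _)
    _ = Real.exp P * Pdef μ x := tsum_mul_left
    _ ≤ Real.exp P * P := by gcongr

namespace IsSatDNLSSol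

variable {γ ρ : ℝ} {s : Set ℝ} {φ φ' : ℝ → l2} {t : ℝ}

theorem I_smul_add_neighborSum_apply (hφ : IsSatDNLSSol γ ρ s φ φ') (ht : t ∈ s) (n : ℤ) :
    (I • φ' t + l2.neighborSum (φ t)) n
      = ((-(γ * ‖φ t n‖ ^ 2 / (1 + ρ * ‖φ t n‖ ^ 2)) : ℝ) : ℂ) * φ t n := by
  rw [lp.coeFn_add, Pi.add_apply, lp.coeFn_smul, Pi.smul_apply, smul_eq_mul,
    l2.neighborSum_apply]
  have h := hφ.2.2 t ht n
  push_cast at h ⊢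
  linear_combination h

theorem re_inner_eq_zero (hφ : IsSatDNLSSol γ ρ s φ φ') (ht : t ∈ s) :
    (inner ℂ (φ t) (φ' t)).re = 0 := by
  rw [l2.re_inner_eq_im_inner_add_neighborSum]
  exact l2.im_inner_eq_zero_of_apply_eq_ofReal_mul _ (hφ.I_smul_add_neighborSum_apply ht)

theorem norm_le {a b : ℝ} (hφ : IsSatDNLSSol γ ρ (Icc a b) φ φ') :
    ∀ t ∈ Icc a b, ‖φ t‖ ≤ ‖φ a‖ := fun t ht => by
  simpa using norm_le_add_mul_of_re_inner_le (𝕜 := ℂ) le_rfl hφ.1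
    (fun τ hτ => by simp [hφ.re_inner_eq_zero hτ]) t ht

theorem norm_I_smul_add_neighborSum_le (hγ : 0 ≤ γ) (hρ : 0 ≤ ρ)
    (hφ : IsSatDNLSSol γ ρ s φ φ') (ht : t ∈ s) :
    ‖I • φ' t + l2.neighborSum (φ t)‖ ≤ γ * ‖φ t‖ ^ 3 := by
  have h := l2.norm_le_mul_of_norm_apply_le (v := φ t) (C := γ * ‖φ t‖ ^ 2) (by positivity)
    fun n => by
      rw [hφ.I_smul_add_neighborSum_apply ht, norm_mul, Complex.norm_real, norm_neg,
        Real.norm_of_nonneg (by positivity)]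
      gcongr
      calc γ * ‖φ t n‖ ^ 2 / (1 + ρ * ‖φ t n‖ ^ 2) ≤ γ * ‖φ t n‖ ^ 2 :=
            div_le_self (by positivity) (le_add_of_nonneg_right (by positivity))
        _ ≤ γ * ‖φ t‖ ^ 2 := by gcongr; exact lp.norm_apply_le_norm two_ne_zero _ _
  exact h.trans_eq (by ring)

end IsSatDNLSSol

namespace IsALSol

variable {μ : ℝ} {s : Set ℝ} {ψ ψ' : ℝ → l2} {t : ℝ}

theorem I_smul_add_neighborSum_apply (hψ : IsALSol μ s ψ ψ') (ht : t ∈ s) (n : ℤ) :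
    (I • ψ' t + l2.neighborSum (ψ t)) n
      = ((-(μ * ‖ψ t n‖ ^ 2) : ℝ) : ℂ) * l2.neighborSum (ψ t) n := by
  rw [lp.coeFn_add, Pi.add_apply, lp.coeFn_smul, Pi.smul_apply, smul_eq_mul,
    l2.neighborSum_apply]
  have h := hψ.2.2 t ht n
  push_cast at h ⊢
  linear_combination h

theorem norm_I_smul_add_neighborSum_le (hμ : 0 ≤ μ) (hψ : IsALSol μ s ψ ψ') (ht : t ∈ s) :
    ‖I • ψ' t + l2.neighborSum (ψ t)‖ ≤ 2 * μ * ‖ψ t‖ ^ 3 := by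
  have h := l2.norm_le_mul_of_norm_apply_le (v := l2.neighborSum (ψ t)) (C := μ * ‖ψ t‖ ^ 2)
    (by positivity) fun n => by
      rw [hψ.I_smul_add_neighborSum_apply ht, norm_mul, Complex.norm_real, norm_neg,
        Real.norm_of_nonneg (by positivity)]
      gcongr
      exact lp.norm_apply_le_norm two_ne_zero _ _
  calc _ ≤ μ * ‖ψ t‖ ^ 2 * (2 * ‖ψ t‖) := h.trans (by gcongr; exact l2.norm_neighborSum_le _)
    _ = 2 * μ * ‖ψ t‖ ^ 3 := by ring

theorem hasDerivWithinAt_log (hμ : 0 ≤ μ) (hψ : IsALSol μ s ψ ψ') (ht : t ∈ s) (n : ℤ) :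
    HasDerivWithinAt (fun τ => Real.log (1 + μ * ‖ψ τ n‖ ^ 2))
      (2 * μ * bondCurrent (ψ t) n - 2 * μ * bondCurrent (ψ t) (n - 1)) s t := by
  have hpos : 0 < 1 + μ * ‖ψ t n‖ ^ 2 := by positivity
  have hderiv : ψ' t n = I * ((1 + μ * ‖ψ t n‖ ^ 2 : ℝ) * (ψ t (n + 1) + ψ t (n - 1))) := by
    have h := hψ.2.2 t ht n
    push_cast at h ⊢
    linear_combination (-I) * h + ψ' t n * I_sq
  have h := (((hasDerivWithinAt_norm_sq (𝕜 := ℂ)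
    (l2.hasDerivWithinAt_apply (hψ.1 t ht) n)).const_mul μ).const_add 1).log hpos.ne'
  have hre : RCLike.re (inner ℂ (ψ t n) (ψ' t n))
      = (1 + μ * ‖ψ t n‖ ^ 2) * (bondCurrent (ψ t) n - bondCurrent (ψ t) (n - 1)) := by
    rw [hderiv, ← re_conj_mul_I_mul_add_eq_bondCurrent_sub, RCLike.inner_apply,
      RCLike.re_to_complex, ← Complex.re_ofReal_mul]
    ring_nf
  refine h.congr_deriv ?_
  rw [hre]
  field_simp

theorem Pdef_eq {a b : ℝ} (hμ : 0 ≤ μ) (hψ : IsALSol μ (Icc a b) ψ ψ') :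
    ∀ t ∈ Icc a b, Pdef μ (ψ t) = Pdef μ (ψ a) :=
  tsum_eq_of_hasDerivWithinAt_sub (fun n _ ht => hψ.hasDerivWithinAt_log hμ ht n)
    (l2.tendstoUniformlyOn_const_mul_bondCurrent (2 * μ) isCompact_Icc
      fun t ht => (hψ.1 t ht).continuousWithinAt)
    fun t _ => summable_log_one_add_mul_norm_sq hμ (ψ t)

end IsALSol

theorem IsSatDNLSSol.norm_sub_le_of_isALSol {γ ρ μ a b A B : ℝ} (hγ : 0 ≤ γ) (hρ : 0 ≤ ρ)
    (hμ : 0 ≤ μ) {φ φ' ψ ψ' : ℝ → l2} (hφ : IsSatDNLSSol γ ρ (Icc a b) φ φ')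
    (hψ : IsALSol μ (Icc a b) ψ ψ') (hA : ∀ t ∈ Icc a b, ‖φ t‖ ≤ A)
    (hB : ∀ t ∈ Icc a b, ‖ψ t‖ ≤ B) :
    ∀ t ∈ Icc a b, ‖φ t - ψ t‖ ≤ ‖φ a - ψ a‖ + (γ * A ^ 3 + 2 * μ * B ^ 3) * (t - a) := by
  intro t ht
  have ha : a ∈ Icc a b := ⟨le_rfl, ht.1.trans ht.2⟩
  have hA₀ : 0 ≤ A := (norm_nonneg _).trans (hA a ha)
  have hB₀ : 0 ≤ B := (norm_nonneg _).trans (hB a ha)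
  refine norm_le_add_mul_of_re_inner_le (𝕜 := ℂ) (f' := fun τ => φ' τ - ψ' τ) (by positivity)
    (fun τ hτ => (hφ.1 τ hτ).sub (hψ.1 τ hτ)) (fun τ hτ => ?_) t ht
  calc _ ≤ |(inner ℂ (φ τ - ψ τ) (φ' τ - ψ' τ)).re| := le_abs_self _
    _ ≤ ‖φ τ - ψ τ‖ * (‖I • φ' τ + l2.neighborSum (φ τ)‖ + ‖I • ψ' τ + l2.neighborSum (ψ τ)‖) :=
        l2.abs_re_inner_sub_le _ _ _ _
    _ ≤ ‖φ τ - ψ τ‖ * (γ * A ^ 3 + 2 * μ * B ^ 3) := by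
        gcongr
        · exact (hφ.norm_I_smul_add_neighborSum_le hγ hρ hτ).trans (by gcongr; exact hA τ hτ)
        · exact (hψ.norm_I_smul_add_neighborSum_le hμ hτ).trans (by gcongr; exact hB τ hτ)
    _ = _ := mul_comm _ _

/-- Closeness of solutions of the saturable DNLS and the AL lattice in the `ℓ²` metric:
under the same smallness hypotheses on the initial data as in the cubic case, the solutions
satisfy `‖φ(t) − ψ(t)‖ ≤ Cε³` on `[0, T_f]`. -/
theorem closeness_saturable_l2 (γ ρ μ C₀ Cγ₀ Cμ₀ Tf : ℝ) (hγ : 0 < γ) (hρ : 0 < ρ)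
    (hμ : 0 < μ) (hC₀ : 0 < C₀) (hCγ₀ : 0 < Cγ₀) (hCμ₀ : 0 < Cμ₀) (hTf : 0 < Tf) :
    ∃ C : ℝ, 0 < C ∧
      ∀ ε : ℝ, 0 < ε → ε < 1 →
        ∀ φ φ' ψ ψ' : ℝ → l2,
          IsSatDNLSSol γ ρ (Icc 0 Tf) φ φ' →
          IsALSol μ (Icc 0 Tf) ψ ψ' →
          ‖φ 0 - ψ 0‖ ≤ C₀ * ε ^ 3 →
          ‖φ 0‖ ≤ Cγ₀ * ε →
          Pdef μ (ψ 0) ≤ Cμ₀ * ε ^ 2 →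
          ∀ t ∈ Icc 0 Tf, ‖φ t - ψ t‖ ≤ C * ε ^ 3 := by
  set M := √(Real.exp Cμ₀ * Cμ₀ / μ)
  refine ⟨C₀ + (γ * Cγ₀ ^ 3 + 2 * μ * M ^ 3) * Tf, by positivity, ?_⟩
  intro ε hε hε₁ φ φ' ψ ψ' hφ hψ hΔ₀ hφ₀ hψ₀ t ht
  have hφ_le : ∀ τ ∈ Icc 0 Tf, ‖φ τ‖ ≤ Cγ₀ * ε := fun τ hτ => (hφ.norm_le τ hτ).trans hφ₀
  have hψ_le : ∀ τ ∈ Icc 0 Tf, ‖ψ τ‖ ≤ M * ε := fun τ hτ => by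
    have hP := mul_norm_sq_le_exp_mul_of_Pdef_le hμ.le ((hψ.Pdef_eq hμ.le τ hτ).trans_le hψ₀)
    have hε₂ : ε ^ 2 ≤ 1 := pow_le_one₀ hε.le hε₁.le
    refine (pow_le_pow_iff_left₀ (norm_nonneg _) (by positivity) two_ne_zero).1 ?_
    rw [mul_pow, Real.sq_sqrt (by positivity), div_mul_eq_mul_div, le_div_iff₀ hμ, mul_comm]
    calc μ * ‖ψ τ‖ ^ 2 ≤ Real.exp (Cμ₀ * ε ^ 2) * (Cμ₀ * ε ^ 2) := hP
      _ ≤ Real.exp Cμ₀ * (Cμ₀ * ε ^ 2) := by gcongr; nlinarith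
      _ = _ := by ring
  calc ‖φ t - ψ t‖
      ≤ ‖φ 0 - ψ 0‖ + (γ * (Cγ₀ * ε) ^ 3 + 2 * μ * (M * ε) ^ 3) * (t - 0) :=
        hφ.norm_sub_le_of_isALSol hγ.le hρ.le hμ.le hψ hφ_le hψ_le t ht
    _ ≤ C₀ * ε ^ 3 + (γ * (Cγ₀ * ε) ^ 3 + 2 * μ * (M * ε) ^ 3) * Tf := by
        gcongr; linarith [ht.2]
    _ = (C₀ + (γ * Cγ₀ ^ 3 + 2 * μ * M ^ 3) * Tf) * ε ^ 3 := by ring
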